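/- Let G be a finite simple graph with global ℓth-order clustering coefficient C_ℓ < 1, and let a > 1 with a·C_ℓ > 1. Then there exists a vertex u such that both cut_{K_ℓ}(N'_u) ≤ a·(1 - C_ℓ)·|W_ℓ(u)| and C_ℓ(u) ≥ (a·C_ℓ - 1)/(a - 1), where |W_ℓ(u)| is the number of ℓ-wedges centered at u and C_ℓ(u) the local ℓth-order clustering coefficient. -/

import Mathlib

/-- The set of `ℓ`-wedges of `G`: pairs of an `ℓ`-clique `p.1` and an adjacent edge, given
by the shared vertex `p.2.1 ∈ p.1` and an outside endpoint `p.2.2 ∉ p.1`. -/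
def wedges {V : Type*} (G : SimpleGraph V) (ℓ : ℕ) : Set (Finset V × V × V) :=
  {p | G.IsNClique ℓ p.1 ∧ p.2.1 ∈ p.1 ∧ p.2.2 ∉ p.1 ∧ G.Adj p.2.1 p.2.2}

/-- The set of closed `ℓ`-wedges: the clique together with the outside endpoint forms an
`(ℓ+1)`-clique. -/
def closedWedges {V : Type*} [DecidableEq V] (G : SimpleGraph V) (ℓ : ℕ) :
    Set (Finset V × V × V) :=
  wedges G ℓ ∩ {p | G.IsNClique (ℓ + 1) (insert p.2.2 p.1)}

/-- The global `ℓ`th-order clustering coefficient: the fraction of `ℓ`-wedges that are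
closed. -/
noncomputable def globalCC {V : Type*} [Fintype V] [DecidableEq V]
    (G : SimpleGraph V) (ℓ : ℕ) : ℝ :=
  ((closedWedges G ℓ).ncard : ℝ) / ((wedges G ℓ).ncard : ℝ)

/-- The number of `ℓ`-cliques cut by the partition `(N'_v, complement)`, where
`N'_v = {v} ∪ neighbors(v)`. -/
noncomputable def nbrCut {V : Type*} [Fintype V] (G : SimpleGraph V) (ℓ : ℕ) (v : V) : ℕ :=
  {s : Finset V | G.IsNClique ℓ s ∧
    (∃ x ∈ s, x ∈ insert v (G.neighborSet v)) ∧
    (∃ x ∈ s, x ∉ insert v (G.neighborSet v))}.ncard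

/-- The set of `ℓ`-wedges centered at `u`: an `ℓ`-clique containing `u` together with an
edge from `u` to an outside vertex. -/
def wedgesAt {V : Type*} (G : SimpleGraph V) (ℓ : ℕ) (u : V) : Set (Finset V × V) :=
  {p | G.IsNClique ℓ p.1 ∧ u ∈ p.1 ∧ p.2 ∉ p.1 ∧ G.Adj u p.2}

/-- The set of closed `ℓ`-wedges centered at `u`. -/
def closedWedgesAt {V : Type*} [DecidableEq V] (G : SimpleGraph V) (ℓ : ℕ) (u : V) :
    Set (Finset V × V) :=
  wedgesAt G ℓ u ∩ {p | G.IsNClique (ℓ + 1) (insert p.2 p.1)}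

/-- The local `ℓ`th-order clustering coefficient of `u`: the fraction of `ℓ`-wedges
centered at `u` that are closed. -/
noncomputable def localCC {V : Type*} [Fintype V] [DecidableEq V]
    (G : SimpleGraph V) (ℓ : ℕ) (u : V) : ℝ :=
  ((closedWedgesAt G ℓ u).ncard : ℝ) / ((wedgesAt G ℓ u).ncard : ℝ)

/-!
Weight each vertex `u` by `|W_ℓ(u)|`. An `ℓ`-clique cut by `N'_u`, together with the edge from
`u` to one of its vertices inside `N'_u`, is an open wedge with outer endpoint `u`; hence
`∑_u cut(N'_u) ≤ (1 - C_ℓ) |W_ℓ|`. Markov's inequality for `cut(N'_u) / |W_ℓ(u)|` and for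
`1 - C_ℓ(u)`, both of weighted mean at most `1 - C_ℓ`, shows that the vertices violating the
first bound have total weight `< |W_ℓ| / a` and those violating the second `< (1 - 1/a) |W_ℓ|`,
so some vertex of positive weight violates neither.
-/

open Finset

section Counting

variable {α β γ : Type*}

theorem Set.ncard_eq_sum_ncard_inter_preimage [Finite α] [Fintype β] [DecidableEq β]
    (S : Set α) (f : α → β) : S.ncard = ∑ b, (S ∩ f ⁻¹' {b}).ncard := by
  classical
  have := Fintype.ofFinite α
  simp only [Set.ncard_eq_toFinset_card']
  rw [card_eq_sum_card_fiberwise (f := f) (t := Finset.univ) fun _ _ => by simp]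
  refine sum_congr rfl fun b _ => congrArg card ?_
  ext a
  simp

theorem Set.ncard_inter_setOf_snd_fst_eq (S : Set (α × β × γ)) (b : β) :
    (S ∩ {p | p.2.1 = b}).ncard = {q : α × γ | (q.1, b, q.2) ∈ S}.ncard := by
  have hinj : Function.Injective fun q : α × γ => (q.1, b, q.2) := by
    rintro ⟨_, _⟩ ⟨_, _⟩ h
    simp_all
  rw [← Set.ncard_image_of_injective _ hinj]
  congr 1
  ext ⟨a, b', c⟩
  constructor
  · rintro ⟨h, rfl : b' = b⟩
    exact ⟨(a, c), h, rfl⟩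
  · rintro ⟨q, hq, h⟩
    cases h
    exact ⟨hq, rfl⟩

theorem Set.ncard_eq_sum_ncard_middle_slice [Finite α] [Fintype β] [DecidableEq β] [Finite γ]
    (S : Set (α × β × γ)) : S.ncard = ∑ b, {q : α × γ | (q.1, b, q.2) ∈ S}.ncard := by
  rw [S.ncard_eq_sum_ncard_inter_preimage fun p => p.2.1]
  exact sum_congr rfl fun b _ => S.ncard_inter_setOf_snd_fst_eq b

end Counting

section Wedges

variable {V : Type*} [DecidableEq V]

/-- The vertex of `s` outside `N'_u` is not adjacent to `u`: this keeps `u` out of `s` and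
the wedge open. -/
theorem exists_openWedge_of_cut {G : SimpleGraph V} {ℓ : ℕ} {u : V} {s : Finset V}
    (hs : G.IsNClique ℓ s) (hin : ∃ x ∈ s, x ∈ insert u (G.neighborSet u))
    (hout : ∃ y ∈ s, y ∉ insert u (G.neighborSet u)) :
    ∃ x, (s, x, u) ∈ wedges G ℓ \ closedWedges G ℓ := by
  obtain ⟨x, hxs, hx⟩ := hin
  obtain ⟨y, hys, hy⟩ := hout
  simp only [Set.mem_insert_iff, SimpleGraph.mem_neighborSet, not_or] at hx hy
  have hus : u ∉ s := fun hus =>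
    hy.2 (hs.isClique (mem_coe.2 hus) (mem_coe.2 hys) (Ne.symm hy.1))
  have hux : G.Adj u x := hx.resolve_left fun h => hus (h ▸ hxs)
  refine ⟨x, ⟨hs, hxs, hus, hux.symm⟩, fun hcl => hy.2 ?_⟩
  exact hcl.2.isClique (by simp) (by simp [hys]) (Ne.symm hy.1)

variable [Fintype V] (G : SimpleGraph V) (ℓ : ℕ)

theorem ncard_wedges_eq_sum : (wedges G ℓ).ncard = ∑ u, (wedgesAt G ℓ u).ncard :=
  (wedges G ℓ).ncard_eq_sum_ncard_middle_slice

theorem ncard_closedWedges_eq_sum :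
    (closedWedges G ℓ).ncard = ∑ u, (closedWedgesAt G ℓ u).ncard :=
  (closedWedges G ℓ).ncard_eq_sum_ncard_middle_slice

theorem ncard_closedWedgesAt_le (u : V) :
    (closedWedgesAt G ℓ u).ncard ≤ (wedgesAt G ℓ u).ncard :=
  Set.ncard_le_ncard Set.inter_subset_left

theorem nbrCut_le_ncard_openWedges (u : V) :
    nbrCut G ℓ u ≤ ((wedges G ℓ \ closedWedges G ℓ) ∩ {p | p.2.2 = u}).ncard := by
  classical
  let x (s : Finset V) : V := if h : ∃ x, (s, x, u) ∈ wedges G ℓ \ closedWedges G ℓ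
    then h.choose else u
  refine Set.ncard_le_ncard_of_injOn (fun s => (s, x s, u)) ?_ ?_
  · rintro s ⟨hs, hin, hout⟩
    have h := exists_openWedge_of_cut hs hin hout
    refine ⟨?_, rfl⟩
    simpa only [x, dif_pos h] using h.choose_spec
  · intro s _ t _ h
    exact congrArg Prod.fst h

theorem sum_nbrCut_add_ncard_closedWedges_le :
    ∑ u, nbrCut G ℓ u + (closedWedges G ℓ).ncard ≤ (wedges G ℓ).ncard := by
  calc ∑ u, nbrCut G ℓ u + (closedWedges G ℓ).ncard
      ≤ ∑ u, ((wedges G ℓ \ closedWedges G ℓ) ∩ (·.2.2) ⁻¹' {u}).ncard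
          + (closedWedges G ℓ).ncard :=
        Nat.add_le_add_right (sum_le_sum fun u _ => nbrCut_le_ncard_openWedges G ℓ u) _
    _ = (wedges G ℓ \ closedWedges G ℓ).ncard + (closedWedges G ℓ).ncard := by
        rw [← Set.ncard_eq_sum_ncard_inter_preimage]
    _ = (wedges G ℓ).ncard := Set.ncard_sdiff_add_ncard_of_subset Set.inter_subset_left

end Wedges

section Averaging

variable {ι : Type*} {s : Finset ι} {w c k : ι → ℝ}

theorem Finset.sum_filter_mul_lt_lt_of_sum_le_mul {t M : ℝ} (ht : 0 < t) (hM : 0 < M)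
    (hk : ∀ i ∈ s, 0 ≤ k i) (hsum : ∑ i ∈ s, k i ≤ t * M) :
    ∑ i ∈ s with t * w i < k i, w i < M := by
  rcases (s.filter fun i => t * w i < k i).eq_empty_or_nonempty with h | h
  · rwa [h, sum_empty]
  refine lt_of_mul_lt_mul_left ?_ ht.le
  calc t * ∑ i ∈ s with t * w i < k i, w i
      = ∑ i ∈ s with t * w i < k i, t * w i := mul_sum _ _ _
    _ < ∑ i ∈ s with t * w i < k i, k i :=
        sum_lt_sum_of_nonempty h fun i hi => (mem_filter.1 hi).2
    _ ≤ ∑ i ∈ s, k i :=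
        sum_le_sum_of_subset_of_nonneg (filter_subset _ _) fun i hi _ => hk i hi
    _ ≤ t * M := hsum

theorem Finset.exists_pos_not_not_of_sum_filter_add_sum_filter_lt (p q : ι → Prop)
    [DecidablePred p] [DecidablePred q] (hw : ∀ i ∈ s, 0 ≤ w i)
    (h : ∑ i ∈ s with p i, w i + ∑ i ∈ s with q i, w i < ∑ i ∈ s, w i) :
    ∃ i ∈ s, 0 < w i ∧ ¬p i ∧ ¬q i := by
  by_contra! hcon
  refine h.not_ge ?_
  rw [sum_filter, sum_filter, ← sum_add_distrib]
  refine sum_le_sum fun i hi => ?_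
  have := hw i hi
  by_cases hp : p i <;> by_cases hq : q i <;>
    simp only [hp, hq, if_true, if_false, add_zero, zero_add]
  all_goals first | linarith | exact not_lt.1 fun hpos => hq (hcon i hi hpos hp)

theorem Finset.exists_le_mul_and_mul_le_of_sum {C a : ℝ} (hw : ∀ i ∈ s, 0 ≤ w i)
    (hcw : ∀ i ∈ s, c i ≤ w i) (hk : ∀ i ∈ s, 0 ≤ k i) (hW : 0 < ∑ i ∈ s, w i)
    (hsumc : ∑ i ∈ s, c i = C * ∑ i ∈ s, w i)
    (hsumk : ∑ i ∈ s, k i ≤ (1 - C) * ∑ i ∈ s, w i) (hC : C < 1) (ha : 1 < a) :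
    ∃ i ∈ s, 0 < w i ∧ k i ≤ a * (1 - C) * w i ∧ (a * C - 1) / (a - 1) * w i ≤ c i := by
  set W := ∑ i ∈ s, w i with hWdef
  set θ := (a * C - 1) / (a - 1)
  have ha₀ : 0 < a := by linarith
  have ha₁ : 0 < a - 1 := by linarith
  have hC₁ : 0 < 1 - C := by linarith
  have hθ : 1 - θ = a * (1 - C) / (a - 1) := by rw [one_sub_div ha₁.ne']; ring
  have hcut : ∑ i ∈ s with a * (1 - C) * w i < k i, w i < W / a :=
    sum_filter_mul_lt_lt_of_sum_le_mul (by positivity) (by positivity) hk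
      (by convert hsumk using 1; field_simp)
  have hopen : ∑ i ∈ s with (1 - θ) * w i < w i - c i, w i < (a - 1) / a * W :=
    sum_filter_mul_lt_lt_of_sum_le_mul (by rw [hθ]; positivity) (by positivity)
      (fun i hi => sub_nonneg.2 (hcw i hi))
      (le_of_eq (by rw [sum_sub_distrib, hsumc, hθ, ← hWdef]; field_simp))
  obtain ⟨i, hi, hwi, hki, hci⟩ := exists_pos_not_not_of_sum_filter_add_sum_filter_lt _ _ hw
    (by calc _ < W / a + (a - 1) / a * W := add_lt_add hcut hopen
             _ = W := by field_simp; ring)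
  exact ⟨i, hi, hwi, not_lt.1 hki, by linarith [not_lt.1 hci]⟩

end Averaging

theorem stmt_17_general {V : Type*} [Fintype V] [DecidableEq V] (G : SimpleGraph V) (ℓ : ℕ)
    (hW : 0 < (wedges G ℓ).ncard) (hC : globalCC G ℓ < 1)
    (a : ℝ) (ha : 1 < a) :
    ∃ u : V,
      (nbrCut G ℓ u : ℝ) ≤ a * (1 - globalCC G ℓ) * ((wedgesAt G ℓ u).ncard : ℝ) ∧
      localCC G ℓ u ≥ (a * globalCC G ℓ - 1) / (a - 1) := by
  have hWpos : (0 : ℝ) < ∑ u, ((wedgesAt G ℓ u).ncard : ℝ) := by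
    rw [← Nat.cast_sum, ← ncard_wedges_eq_sum]
    exact_mod_cast hW
  have hsumc : ∑ u, ((closedWedgesAt G ℓ u).ncard : ℝ)
      = globalCC G ℓ * ∑ u, ((wedgesAt G ℓ u).ncard : ℝ) := by
    rw [globalCC, ← Nat.cast_sum, ← Nat.cast_sum, ← ncard_wedges_eq_sum,
      ← ncard_closedWedges_eq_sum, div_mul_cancel₀ _ (by positivity)]
  have hsumk : ∑ u, (nbrCut G ℓ u : ℝ)
      ≤ (1 - globalCC G ℓ) * ∑ u, ((wedgesAt G ℓ u).ncard : ℝ) := by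
    have h := sum_nbrCut_add_ncard_closedWedges_le G ℓ
    rw [ncard_wedges_eq_sum, ncard_closedWedges_eq_sum] at h
    have h' : ∑ u, (nbrCut G ℓ u : ℝ) + ∑ u, ((closedWedgesAt G ℓ u).ncard : ℝ)
        ≤ ∑ u, ((wedgesAt G ℓ u).ncard : ℝ) := by exact_mod_cast h
    linarith
  obtain ⟨u, -, hwu, hcut, hcc⟩ := exists_le_mul_and_mul_le_of_sum (s := univ)
    (fun u _ => Nat.cast_nonneg _) (fun u _ => by exact_mod_cast ncard_closedWedgesAt_le G ℓ u)
    (fun u _ => Nat.cast_nonneg _) hWpos hsumc hsumk hC ha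
  exact ⟨u, hcut, (le_div_iff₀ hwu).2 hcc⟩

theorem stmt_17 {V : Type*} [Fintype V] [DecidableEq V] (G : SimpleGraph V) (ℓ : ℕ)
    (hW : 0 < (wedges G ℓ).ncard) (hC : globalCC G ℓ < 1)
    (a : ℝ) (ha : 1 < a) (haC : 1 < a * globalCC G ℓ) :
    ∃ u : V,
      (nbrCut G ℓ u : ℝ) ≤ a * (1 - globalCC G ℓ) * ((wedgesAt G ℓ u).ncard : ℝ) ∧
      localCC G ℓ u ≥ (a * globalCC G ℓ - 1) / (a - 1) :=
  stmt_17_general G ℓ hW hC a ha
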